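/- Let h(α) = 1 - α - 2e^{α} + e^{3α}. Then h(0) = 0, h'(0) = 0, h''(0) = 7, and h(α) > 0 for all α ≠ 0. -/

import Mathlib

/-!
Writing `t = e^α`, the strict inequality `α < t - 1` for `α ≠ 0` gives
`h(α) > 1 - (t - 1) - 2t + t³ = (t - 1)²(t + 2) ≥ 0`.
-/

/-- `h(α) = 1 - α - 2 e^α + e^{3α}`, equal to `α² e² Z(1)` for the dP₂ soliton. -/
noncomputable def solitonH (α : ℝ) : ℝ := 1 - α - 2 * Real.exp α + Real.exp (3 * α)

open Real

lemma hasDerivAt_exp_three_mul (α : ℝ) :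
    HasDerivAt (fun x => exp (3 * x)) (3 * exp (3 * α)) α := by
  simpa [mul_comm] using ((hasDerivAt_id α).const_mul 3).exp

lemma hasDerivAt_solitonH (α : ℝ) :
    HasDerivAt solitonH (-1 - 2 * exp α + 3 * exp (3 * α)) α :=
  ((((hasDerivAt_const α 1).sub (hasDerivAt_id α)).sub
    ((hasDerivAt_exp α).const_mul 2)).add (hasDerivAt_exp_three_mul α)).congr_deriv (by ring)

lemma deriv_solitonH : deriv solitonH = fun α => -1 - 2 * exp α + 3 * exp (3 * α) :=
  funext fun α => (hasDerivAt_solitonH α).deriv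

lemma hasDerivAt_deriv_solitonH (α : ℝ) :
    HasDerivAt (deriv solitonH) (-2 * exp α + 9 * exp (3 * α)) α := by
  rw [deriv_solitonH]
  exact (((hasDerivAt_const α (-1)).sub ((hasDerivAt_exp α).const_mul 2)).add
    ((hasDerivAt_exp_three_mul α).const_mul 3)).congr_deriv (by ring)

lemma solitonH_pos {α : ℝ} (hα : α ≠ 0) : 0 < solitonH α := by
  set t := exp α
  have hcube : exp (3 * α) = t ^ 3 := by rw [← exp_nat_mul]; norm_num
  calc 0 ≤ (t - 1) ^ 2 * (t + 2) := by positivity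
    _ = 1 - (t - 1) - 2 * t + t ^ 3 := by ring
    _ < 1 - α - 2 * t + t ^ 3 := by linarith [add_one_lt_exp hα]
    _ = solitonH α := by rw [solitonH, hcube]

theorem solitonH_props :
    solitonH 0 = 0 ∧ deriv solitonH 0 = 0 ∧ deriv (deriv solitonH) 0 = 7 ∧
      ∀ α : ℝ, α ≠ 0 → 0 < solitonH α := by
  refine ⟨by norm_num [solitonH], ?_, ?_, fun α => solitonH_pos⟩
  · rw [deriv_solitonH]; norm_num
  · rw [(hasDerivAt_deriv_solitonH 0).deriv]; norm_num
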